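/- arXiv:2401.10884 — 2 statements merged into one kernel-verified Lean document; each statement's English description precedes it below -/
import Mathlib

section
/- Let 1/2 < s ≤ 1, λ₁ > 0 and define c(λ₁) = 2s (λ₁/(2s−1))^{(2s−1)/(2s)}. If 0 < λ₂ < c(λ₁), then for every ξ ∈ ℝ both eigenvalues λ_±(ξ) = |ξ|^{2s} + λ₁ ± λ₂ξ of the matrix Q̂(ξ) = [[λ₁ + |ξ|^{2s}, −iλ₂ξ],[iλ₂ξ, λ₁ + |ξ|^{2s}]] are strictly positive. -/
/-!
Both eigenvalues are at least `|ξ| ^ p + λ₁ - λ₂ |ξ|` with `p = 2s > 1`. By Young's inequality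
with the conjugate exponent `q = p / (p - 1)`, `λ₂ x ≤ x ^ p + (p - 1) (λ₂ / p) ^ q` for `x ≥ 0`
(equality at the minimiser of `x ^ p - λ₂ x`), and raising the hypothesis `λ₂ < c(λ₁)` to the
power `q` says exactly that `(p - 1) (λ₂ / p) ^ q < λ₁`.
-/

open Real

namespace Real.HolderConjugate

variable {p q : ℝ}

theorem mul_le_rpow_add (hpq : p.HolderConjugate q) {a x : ℝ} (ha : 0 ≤ a) (hx : 0 ≤ x) :
    a * x ≤ x ^ p + (p - 1) * (a / p) ^ q := by
  have hp : 0 < p := hpq.pos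
  -- Young's inequality for `(t x) (a / t)` with `t ^ p = p`.
  set t := p ^ p⁻¹
  have ht : 0 < t := rpow_pos_of_pos hp _
  have htp : t ^ p = p := rpow_inv_rpow hp.le hpq.ne_zero
  have htq : t ^ q * p = p ^ q := by
    rw [← htp, ← rpow_add ht, ← rpow_mul ht.le, hpq.mul_eq_add, add_comm]
  have young := young_inequality_of_nonneg (mul_nonneg ht.le hx) (div_nonneg ha ht.le) hpq
  have hleft : t * x * (a / t) = a * x := by field_simp
  have hfirst : (t * x) ^ p / p = x ^ p := by
    rw [mul_rpow ht.le hx, htp, mul_div_cancel_left₀ _ hp.ne']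
  have hsecond : (a / t) ^ q / q = (p - 1) * (a / p) ^ q := by
    rw [div_rpow ha ht.le, div_rpow ha hp.le, ← htq]
    have := (rpow_pos_of_pos ht q).ne'
    have := hpq.symm.ne_zero
    field_simp
    linear_combination (-a ^ q) * hpq.sub_one_mul_conj
  rwa [hleft, hfirst, hsecond] at young

theorem sub_one_mul_div_rpow_lt (hpq : p.HolderConjugate q) {b c : ℝ} (hb : 0 ≤ b) (hc : 0 ≤ c)
    (h : b < p * (c / (p - 1)) ^ q⁻¹) : (p - 1) * (b / p) ^ q < c := by
  have hp : 0 < p := hpq.pos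
  have hp1 : 0 < p - 1 := hpq.sub_one_pos
  have hbp : b / p < (c / (p - 1)) ^ q⁻¹ := by rwa [div_lt_iff₀' hp]
  rwa [lt_rpow_inv_iff_of_pos (div_nonneg hb hp.le) (div_nonneg hc hp1.le) hpq.symm.pos,
    lt_div_iff₀' hp1] at hbp

end Real.HolderConjugate

theorem eigenvalues_positive_general (s lam1 lam2 : ℝ) (hs : 1 / 2 < s)
    (hlam1 : 0 < lam1) (hlam2 : 0 < lam2)
    (hsub : lam2 < 2 * s * (lam1 / (2 * s - 1)) ^ ((2 * s - 1) / (2 * s))) :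
    ∀ ξ : ℝ, 0 < |ξ| ^ (2 * s) + lam1 + lam2 * ξ ∧ 0 < |ξ| ^ (2 * s) + lam1 - lam2 * ξ := by
  intro ξ
  have hpq : (2 * s).HolderConjugate (2 * s / (2 * s - 1)) :=
    (holderConjugate_iff_eq_conjExponent (by linarith)).2 rfl
  rw [← inv_div (2 * s) (2 * s - 1)] at hsub
  have hgap := hpq.sub_one_mul_div_rpow_lt hlam2.le hlam1.le hsub
  have hyoung := hpq.mul_le_rpow_add hlam2.le (abs_nonneg ξ)
  have hplus : -(lam2 * ξ) ≤ lam2 * |ξ| := by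
    rw [← mul_neg]; exact mul_le_mul_of_nonneg_left (neg_le_abs ξ) hlam2.le
  have hminus : lam2 * ξ ≤ lam2 * |ξ| := mul_le_mul_of_nonneg_left (le_abs_self ξ) hlam2.le
  constructor <;> linarith

/-- If `1/2 < s ≤ 1`, `λ₁ > 0` and `0 < λ₂ < c(λ₁) = 2s(λ₁/(2s-1))^((2s-1)/(2s))`, then
both eigenvalues `λ_±(ξ) = |ξ|^(2s) + λ₁ ± λ₂ξ` of the Hermitian matrix symbol
`Q̂(ξ)` are strictly positive for every `ξ ∈ ℝ`. -/
theorem eigenvalues_positive (s lam1 lam2 : ℝ) (hs : 1 / 2 < s) (hs1 : s ≤ 1)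
    (hlam1 : 0 < lam1) (hlam2 : 0 < lam2)
    (hsub : lam2 < 2 * s * (lam1 / (2 * s - 1)) ^ ((2 * s - 1) / (2 * s))) :
    ∀ ξ : ℝ, 0 < |ξ| ^ (2 * s) + lam1 + lam2 * ξ ∧ 0 < |ξ| ^ (2 * s) + lam1 - lam2 * ξ :=
  eigenvalues_positive_general s lam1 lam2 hs hlam1 hlam2 hsub
end

section
/- Under the hypotheses 1/2 < s ≤ 1, λ₁ > 0, 0 < λ₂ < 2s(λ₁/(2s−1))^{(2s−1)/(2s)}, there exist positive constants α₀, α₁, β₀, β₁ such that for all ξ ∈ ℝ: α₀ + α₁|ξ|^{2s} < λ₁ + |ξ|^{2s} ± λ₂ξ < β₀ + β₁|ξ|^{2s}. In particular one may take β₀ = 2λ₁, β₁ = 2. -/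
/-! By the sharp Young inequality, `λ₂ |ξ| ≤ ε (λ₁ + |ξ| ^ (2s))` with
`ε = λ₂ / (2s (λ₁ / (2s - 1)) ^ ((2s - 1) / (2s))) < 1`, so `λ₁ + |ξ| ^ (2s) ± λ₂ ξ` lies between
`(1 - ε)` and `(1 + ε)` times `λ₁ + |ξ| ^ (2s)`. -/

open Real

/-- Young's inequality with the sharp constant: equality holds at `r = (a / (p - 1)) ^ (1 / p)`. -/
lemma mul_le_add_rpow {p a r : ℝ} (hp : 1 < p) (ha : 0 ≤ a) (hr : 0 ≤ r) :
    p * (a / (p - 1)) ^ ((p - 1) / p) * r ≤ a + r ^ p := by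
  have hp0 : 0 < p := by linarith
  have hp1 : 0 < p - 1 := by linarith
  set A := (a / (p - 1)) ^ ((p - 1) / p)
  have hA : 0 ≤ A := by positivity
  have hAq : A ^ (p / (p - 1)) = a / (p - 1) := by
    rw [← rpow_mul (by positivity), div_mul_div_cancel₀' hp1.ne', div_self hp0.ne', rpow_one]
  have young := young_inequality_of_nonneg hr hA (HolderConjugate.conjExponent hp)
  rw [Real.conjExponent, hAq, div_div_div_cancel_right₀ hp1.ne'] at young
  calc p * A * r = p * (r * A) := by ring
    _ ≤ p * (r ^ p / p + a / p) := by gcongr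
    _ = a + r ^ p := by field_simp; ring

lemma bounds_of_abs_le_mul {q d ε : ℝ} (hq : 0 < q) (hε : ε < 1) (hd : |d| ≤ ε * q) :
    (1 - ε) * q ≤ q + d ∧ q + d < 2 * q := by
  have hεq : ε * q < q := mul_lt_of_lt_one_left hq hε
  constructor <;> linarith [neg_abs_le d, le_abs_self d]

theorem symbol_two_sided_bounds_general (s lam1 lam2 : ℝ) (hs : 1 / 2 < s)
    (hlam1 : 0 < lam1) (hlam2 : 0 < lam2)
    (hsub : lam2 < 2 * s * (lam1 / (2 * s - 1)) ^ ((2 * s - 1) / (2 * s))) :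
    (∃ α₀ α₁ β₀ β₁ : ℝ, 0 < α₀ ∧ 0 < α₁ ∧ 0 < β₀ ∧ 0 < β₁ ∧
      ∀ ξ : ℝ,
        (α₀ + α₁ * |ξ| ^ (2 * s) < lam1 + |ξ| ^ (2 * s) + lam2 * ξ ∧
          lam1 + |ξ| ^ (2 * s) + lam2 * ξ < β₀ + β₁ * |ξ| ^ (2 * s)) ∧
        (α₀ + α₁ * |ξ| ^ (2 * s) < lam1 + |ξ| ^ (2 * s) - lam2 * ξ ∧
          lam1 + |ξ| ^ (2 * s) - lam2 * ξ < β₀ + β₁ * |ξ| ^ (2 * s))) ∧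
    (∀ ξ : ℝ,
      lam1 + |ξ| ^ (2 * s) + lam2 * ξ < 2 * lam1 + 2 * |ξ| ^ (2 * s) ∧
      lam1 + |ξ| ^ (2 * s) - lam2 * ξ < 2 * lam1 + 2 * |ξ| ^ (2 * s)) := by
  set L := 2 * s * (lam1 / (2 * s - 1)) ^ ((2 * s - 1) / (2 * s))
  have hL : 0 < L := hlam2.trans hsub
  set ε := lam2 / L
  have hε : ε < 1 := (div_lt_one hL).mpr hsub
  have hq : ∀ ξ : ℝ, 0 < lam1 + |ξ| ^ (2 * s) := fun ξ => by positivity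
  have hd : ∀ ξ : ℝ, |lam2 * ξ| ≤ ε * (lam1 + |ξ| ^ (2 * s)) := fun ξ => by
    calc |lam2 * ξ| = ε * (L * |ξ|) := by
          rw [abs_mul, abs_of_pos hlam2, ← mul_assoc, div_mul_cancel₀ lam2 hL.ne']
      _ ≤ ε * (lam1 + |ξ| ^ (2 * s)) := by
          gcongr
          exact mul_le_add_rpow (by linarith) hlam1.le (abs_nonneg ξ)
  have hplus := fun ξ => bounds_of_abs_le_mul (hq ξ) hε (hd ξ)
  have hminus := fun ξ => bounds_of_abs_le_mul (hq ξ) hε ((abs_neg (lam2 * ξ)).trans_le (hd ξ))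
  have hα₀ : 0 < (1 - ε) * lam1 := mul_pos (by linarith) hlam1
  refine ⟨⟨(1 - ε) * lam1 / 2, 1 - ε, 2 * lam1, 2, by positivity, by linarith, by positivity,
    two_pos, fun ξ => ?_⟩, fun ξ => ?_⟩
  · obtain ⟨hp₁, hp₂⟩ := hplus ξ
    obtain ⟨hm₁, hm₂⟩ := hminus ξ
    refine ⟨⟨?_, ?_⟩, ?_, ?_⟩ <;> linarith
  · obtain ⟨-, hp⟩ := hplus ξ
    obtain ⟨-, hm⟩ := hminus ξ
    constructor <;> linarith

/-- Under the subcritical-speed condition there are positive constants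
`α₀, α₁, β₀, β₁` with `α₀ + α₁|ξ|^(2s) < λ₁ + |ξ|^(2s) ± λ₂ξ < β₀ + β₁|ξ|^(2s)` for all
`ξ`; in particular one may take `β₀ = 2λ₁`, `β₁ = 2`. -/
theorem symbol_two_sided_bounds (s lam1 lam2 : ℝ) (hs : 1 / 2 < s) (hs1 : s ≤ 1)
    (hlam1 : 0 < lam1) (hlam2 : 0 < lam2)
    (hsub : lam2 < 2 * s * (lam1 / (2 * s - 1)) ^ ((2 * s - 1) / (2 * s))) :
    (∃ α₀ α₁ β₀ β₁ : ℝ, 0 < α₀ ∧ 0 < α₁ ∧ 0 < β₀ ∧ 0 < β₁ ∧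
      ∀ ξ : ℝ,
        (α₀ + α₁ * |ξ| ^ (2 * s) < lam1 + |ξ| ^ (2 * s) + lam2 * ξ ∧
          lam1 + |ξ| ^ (2 * s) + lam2 * ξ < β₀ + β₁ * |ξ| ^ (2 * s)) ∧
        (α₀ + α₁ * |ξ| ^ (2 * s) < lam1 + |ξ| ^ (2 * s) - lam2 * ξ ∧
          lam1 + |ξ| ^ (2 * s) - lam2 * ξ < β₀ + β₁ * |ξ| ^ (2 * s))) ∧
    (∀ ξ : ℝ,
      lam1 + |ξ| ^ (2 * s) + lam2 * ξ < 2 * lam1 + 2 * |ξ| ^ (2 * s) ∧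
      lam1 + |ξ| ^ (2 * s) - lam2 * ξ < 2 * lam1 + 2 * |ξ| ^ (2 * s)) :=
  symbol_two_sided_bounds_general s lam1 lam2 hs hlam1 hlam2 hsub
end
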